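/- Consider the graph H on vertex set {6, 20, 15, 16, 18, 12, 27, 30, 8, 26, 28, 22, 23, 25, 9, 11, 3, 40, 38, 19, 36, 37, 17, 33, 31, 35, 34, 13, 14, 4, 5, 1, 32, 45, 29, 39, 0, 10, 2, 44, 24, 7, 21, 42, 43, 41} with the 67 edges {12,6},{12,20},{20,11},{20,30},{15,8},{15,22},{16,8},{16,9},{16,23},{16,26},{18,9},{18,11},{18,25},{18,28},{6,3},{6,11},{27,17},{27,35},{30,19},{30,38},{8,4},{8,13},{26,17},{26,34},{28,17},{28,19},{28,36},{28,37},{22,13},{22,31},{23,13},{23,14},{23,33},{23,34},{25,14},{25,36},{9,4},{9,5},{9,14},{9,17},{11,5},{11,19},{3,1},{3,5},{40,31},{40,32},{38,29},{38,45},{19,10},{19,29},{36,24},{36,44},{37,29},{37,44},{17,10},{17,24},{33,21},{33,42},{31,21},{31,39},{35,24},{35,43},{34,24},{34,42},{13,7},{13,21},{14,7},{14,24},{4,2},{4,7},{5,2},{5,10},{1,0},{1,2},{32,21},{32,41}. Then H is a connected graph. -/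
import Mathlib


def verts12 : Finset ℕ :=
  {6, 20, 15, 16, 18, 12, 27, 30, 8, 26, 28, 22, 23, 25, 9, 11, 3, 40, 38, 19,
   36, 37, 17, 33, 31, 35, 34, 13, 14, 4, 5, 1, 32, 45, 29, 39, 0, 10, 2, 44,
   24, 7, 21, 42, 43, 41}

def edges12 : List (ℕ × ℕ) :=
  [(12,6),(12,20),(20,11),(20,30),(15,8),(15,22),(16,8),(16,9),(16,23),(16,26),
   (18,9),(18,11),(18,25),(18,28),(6,3),(6,11),(27,17),(27,35),(30,19),(30,38),
   (8,4),(8,13),(26,17),(26,34),(28,17),(28,19),(28,36),(28,37),(22,13),(22,31),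
   (23,13),(23,14),(23,33),(23,34),(25,14),(25,36),(9,4),(9,5),(9,14),(9,17),
   (11,5),(11,19),(3,1),(3,5),(40,31),(40,32),(38,29),(38,45),(19,10),(19,29),
   (36,24),(36,44),(37,29),(37,44),(17,10),(17,24),(33,21),(33,42),(31,21),
   (31,39),(35,24),(35,43),(34,24),(34,42),(13,7),(13,21),(14,7),(14,24),
   (4,2),(4,7),(5,2),(5,10),(1,0),(1,2),(32,21),(32,41)]

def H12 : SimpleGraph {v : ℕ // v ∈ verts12} :=
  SimpleGraph.fromRel (fun a b => (a.1, b.1) ∈ edges12)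




def V (n : ℕ) (h : n ∈ verts12 := by decide) : {v : ℕ // v ∈ verts12} := ⟨n, h⟩

lemma adjH (a b : ℕ) (ha : a ∈ verts12) (hb : b ∈ verts12)
    (h : (a, b) ∈ edges12 ∨ (b, a) ∈ edges12) (hne : a ≠ b) :
    H12.Adj ⟨a, ha⟩ ⟨b, hb⟩ :=
  ⟨fun h' => hne (congrArg Subtype.val h'), h⟩

theorem stmt12 : H12.Connected := by
  have r0 : H12.Reachable (V 0) (V 0) := .refl _
  have r1 : H12.Reachable (V 1) (V 0) := .trans (SimpleGraph.Adj.reachable (adjH 1 0 (by decide) (by decide) (by decide) (by decide))) r0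
  have r2 : H12.Reachable (V 2) (V 0) := .trans (SimpleGraph.Adj.reachable (adjH 2 1 (by decide) (by decide) (by decide) (by decide))) r1
  have r3 : H12.Reachable (V 3) (V 0) := .trans (SimpleGraph.Adj.reachable (adjH 3 1 (by decide) (by decide) (by decide) (by decide))) r1
  have r4 : H12.Reachable (V 4) (V 0) := .trans (SimpleGraph.Adj.reachable (adjH 4 2 (by decide) (by decide) (by decide) (by decide))) r2
  have r5 : H12.Reachable (V 5) (V 0) := .trans (SimpleGraph.Adj.reachable (adjH 5 2 (by decide) (by decide) (by decide) (by decide))) r2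
  have r6 : H12.Reachable (V 6) (V 0) := .trans (SimpleGraph.Adj.reachable (adjH 6 3 (by decide) (by decide) (by decide) (by decide))) r3
  have r7 : H12.Reachable (V 7) (V 0) := .trans (SimpleGraph.Adj.reachable (adjH 7 4 (by decide) (by decide) (by decide) (by decide))) r4
  have r8 : H12.Reachable (V 8) (V 0) := .trans (SimpleGraph.Adj.reachable (adjH 8 4 (by decide) (by decide) (by decide) (by decide))) r4
  have r9 : H12.Reachable (V 9) (V 0) := .trans (SimpleGraph.Adj.reachable (adjH 9 4 (by decide) (by decide) (by decide) (by decide))) r4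
  have r10 : H12.Reachable (V 10) (V 0) := .trans (SimpleGraph.Adj.reachable (adjH 10 5 (by decide) (by decide) (by decide) (by decide))) r5
  have r11 : H12.Reachable (V 11) (V 0) := .trans (SimpleGraph.Adj.reachable (adjH 11 5 (by decide) (by decide) (by decide) (by decide))) r5
  have r12 : H12.Reachable (V 12) (V 0) := .trans (SimpleGraph.Adj.reachable (adjH 12 6 (by decide) (by decide) (by decide) (by decide))) r6
  have r13 : H12.Reachable (V 13) (V 0) := .trans (SimpleGraph.Adj.reachable (adjH 13 7 (by decide) (by decide) (by decide) (by decide))) r7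
  have r14 : H12.Reachable (V 14) (V 0) := .trans (SimpleGraph.Adj.reachable (adjH 14 7 (by decide) (by decide) (by decide) (by decide))) r7
  have r15 : H12.Reachable (V 15) (V 0) := .trans (SimpleGraph.Adj.reachable (adjH 15 8 (by decide) (by decide) (by decide) (by decide))) r8
  have r16 : H12.Reachable (V 16) (V 0) := .trans (SimpleGraph.Adj.reachable (adjH 16 8 (by decide) (by decide) (by decide) (by decide))) r8
  have r17 : H12.Reachable (V 17) (V 0) := .trans (SimpleGraph.Adj.reachable (adjH 17 9 (by decide) (by decide) (by decide) (by decide))) r9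
  have r18 : H12.Reachable (V 18) (V 0) := .trans (SimpleGraph.Adj.reachable (adjH 18 9 (by decide) (by decide) (by decide) (by decide))) r9
  have r19 : H12.Reachable (V 19) (V 0) := .trans (SimpleGraph.Adj.reachable (adjH 19 10 (by decide) (by decide) (by decide) (by decide))) r10
  have r20 : H12.Reachable (V 20) (V 0) := .trans (SimpleGraph.Adj.reachable (adjH 20 11 (by decide) (by decide) (by decide) (by decide))) r11
  have r21 : H12.Reachable (V 21) (V 0) := .trans (SimpleGraph.Adj.reachable (adjH 21 13 (by decide) (by decide) (by decide) (by decide))) r13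
  have r22 : H12.Reachable (V 22) (V 0) := .trans (SimpleGraph.Adj.reachable (adjH 22 13 (by decide) (by decide) (by decide) (by decide))) r13
  have r23 : H12.Reachable (V 23) (V 0) := .trans (SimpleGraph.Adj.reachable (adjH 23 13 (by decide) (by decide) (by decide) (by decide))) r13
  have r24 : H12.Reachable (V 24) (V 0) := .trans (SimpleGraph.Adj.reachable (adjH 24 14 (by decide) (by decide) (by decide) (by decide))) r14
  have r25 : H12.Reachable (V 25) (V 0) := .trans (SimpleGraph.Adj.reachable (adjH 25 14 (by decide) (by decide) (by decide) (by decide))) r14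
  have r26 : H12.Reachable (V 26) (V 0) := .trans (SimpleGraph.Adj.reachable (adjH 26 16 (by decide) (by decide) (by decide) (by decide))) r16
  have r27 : H12.Reachable (V 27) (V 0) := .trans (SimpleGraph.Adj.reachable (adjH 27 17 (by decide) (by decide) (by decide) (by decide))) r17
  have r28 : H12.Reachable (V 28) (V 0) := .trans (SimpleGraph.Adj.reachable (adjH 28 17 (by decide) (by decide) (by decide) (by decide))) r17
  have r29 : H12.Reachable (V 29) (V 0) := .trans (SimpleGraph.Adj.reachable (adjH 29 19 (by decide) (by decide) (by decide) (by decide))) r19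
  have r30 : H12.Reachable (V 30) (V 0) := .trans (SimpleGraph.Adj.reachable (adjH 30 19 (by decide) (by decide) (by decide) (by decide))) r19
  have r31 : H12.Reachable (V 31) (V 0) := .trans (SimpleGraph.Adj.reachable (adjH 31 21 (by decide) (by decide) (by decide) (by decide))) r21
  have r32 : H12.Reachable (V 32) (V 0) := .trans (SimpleGraph.Adj.reachable (adjH 32 21 (by decide) (by decide) (by decide) (by decide))) r21
  have r33 : H12.Reachable (V 33) (V 0) := .trans (SimpleGraph.Adj.reachable (adjH 33 21 (by decide) (by decide) (by decide) (by decide))) r21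
  have r34 : H12.Reachable (V 34) (V 0) := .trans (SimpleGraph.Adj.reachable (adjH 34 23 (by decide) (by decide) (by decide) (by decide))) r23
  have r35 : H12.Reachable (V 35) (V 0) := .trans (SimpleGraph.Adj.reachable (adjH 35 24 (by decide) (by decide) (by decide) (by decide))) r24
  have r36 : H12.Reachable (V 36) (V 0) := .trans (SimpleGraph.Adj.reachable (adjH 36 24 (by decide) (by decide) (by decide) (by decide))) r24
  have r37 : H12.Reachable (V 37) (V 0) := .trans (SimpleGraph.Adj.reachable (adjH 37 28 (by decide) (by decide) (by decide) (by decide))) r28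
  have r38 : H12.Reachable (V 38) (V 0) := .trans (SimpleGraph.Adj.reachable (adjH 38 29 (by decide) (by decide) (by decide) (by decide))) r29
  have r39 : H12.Reachable (V 39) (V 0) := .trans (SimpleGraph.Adj.reachable (adjH 39 31 (by decide) (by decide) (by decide) (by decide))) r31
  have r40 : H12.Reachable (V 40) (V 0) := .trans (SimpleGraph.Adj.reachable (adjH 40 31 (by decide) (by decide) (by decide) (by decide))) r31
  have r41 : H12.Reachable (V 41) (V 0) := .trans (SimpleGraph.Adj.reachable (adjH 41 32 (by decide) (by decide) (by decide) (by decide))) r32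
  have r42 : H12.Reachable (V 42) (V 0) := .trans (SimpleGraph.Adj.reachable (adjH 42 33 (by decide) (by decide) (by decide) (by decide))) r33
  have r43 : H12.Reachable (V 43) (V 0) := .trans (SimpleGraph.Adj.reachable (adjH 43 35 (by decide) (by decide) (by decide) (by decide))) r35
  have r44 : H12.Reachable (V 44) (V 0) := .trans (SimpleGraph.Adj.reachable (adjH 44 36 (by decide) (by decide) (by decide) (by decide))) r36
  have r45 : H12.Reachable (V 45) (V 0) := .trans (SimpleGraph.Adj.reachable (adjH 45 38 (by decide) (by decide) (by decide) (by decide))) r38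
  have reach : ∀ w : {v : ℕ // v ∈ verts12}, H12.Reachable w (V 0) := by
    rintro ⟨w, hw⟩
    fin_cases hw <;> assumption
  have : Nonempty {v : ℕ // v ∈ verts12} := ⟨V 0⟩
  exact ⟨fun u v => (reach u).trans (reach v).symm⟩
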